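/- arXiv:2505.04428 — 2 statements merged into one kernel-verified Lean document; each statement's English description precedes it below -/
import Mathlib

section
/- Let R be a ℤ-graded-commutative unital ℝ-algebra concentrated in non-negative degrees, with differential d_R of degree +1 whose kernel on R⁰ is ℝ·1, let V be a finite-dimensional ℤ-graded real vector space, let M = R ⊗ V carry a differential D of degree +1 satisfying D² = 0 and the graded Leibniz rule over (R, d_R), and let ⟨,⟩ be an R-bilinear pairing of degree −d on M that is compatible with D. Assume D(1⊗V) ⊆ R^{≥2} ⊗ V. Then for all homogeneous v, w ∈ V with |v| + |w| = d, the element ⟨1⊗v, 1⊗w⟩ ∈ R⁰ lies in ℝ·1_R; that is, there exists a real number c with ⟨1⊗v, 1⊗w⟩ = c·1_R. -/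
open TensorProduct

/-!
STATEMENT 3: Let `R` be a ℤ-graded-commutative unital ℝ-algebra concentrated in
non-negative degrees with differential `d_R` of degree `+1` whose kernel on `R⁰` is
`ℝ·1`, let `V` be a finite-dimensional ℤ-graded real vector space, let `M = R ⊗ V`
carry a differential `D` squaring to zero and satisfying the graded Leibniz rule over
`(R, d_R)`, and let `⟨,⟩` be an `R`-bilinear pairing of degree `−d` on `M` compatible
with `D`.  If `D(1 ⊗ V) ⊆ R^{≥2} ⊗ V`, then for all homogeneous `v, w ∈ V` with
`|v| + |w| = d` the element `⟨1⊗v, 1⊗w⟩ ∈ R⁰` lies in `ℝ·1`.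
-/

/-- Left multiplication by `r : R` on the free graded module `M = R ⊗ V`. -/
noncomputable def rsmul (R V : Type) [Ring R] [Algebra ℝ R]
    [AddCommGroup V] [Module ℝ V] (r : R) :
    TensorProduct ℝ R V →ₗ[ℝ] TensorProduct ℝ R V :=
  LinearMap.rTensor V (LinearMap.mulLeft ℝ r)

/-- The degree-`n` graded piece `Mⁿ = ⊕_{i+j=n} Rⁱ ⊗ Vʲ` of `M = R ⊗ V`. -/
def gradedPiece (R V : Type) [Ring R] [Algebra ℝ R]
    [AddCommGroup V] [Module ℝ V]
    (𝒜 : ℤ → Submodule ℝ R) (𝒱 : ℤ → Submodule ℝ V) (n : ℤ) :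
    Submodule ℝ (TensorProduct ℝ R V) :=
  Submodule.span ℝ {m | ∃ (i j : ℤ) (r : R) (v : V),
    i + j = n ∧ r ∈ 𝒜 i ∧ v ∈ 𝒱 j ∧ m = r ⊗ₜ[ℝ] v}

/-- The submodule `R^{≥ k} ⊗ V` of `M = R ⊗ V`. -/
def spanDegGE (R V : Type) [Ring R] [Algebra ℝ R]
    [AddCommGroup V] [Module ℝ V]
    (𝒜 : ℤ → Submodule ℝ R) (k : ℤ) :
    Submodule ℝ (TensorProduct ℝ R V) :=
  Submodule.span ℝ {m | ∃ (i : ℤ) (r : R) (v : V),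
    k ≤ i ∧ r ∈ 𝒜 i ∧ m = r ⊗ₜ[ℝ] v}

theorem pairing_of_degree_d_elements_is_constant
    -- R: ℤ-graded-commutative unital ℝ-algebra concentrated in non-negative degrees
    (R : Type) [Ring R] [Algebra ℝ R]
    (𝒜 : ℤ → Submodule ℝ R)
    (hRinternal : DirectSum.IsInternal 𝒜)
    (hRone : (1 : R) ∈ 𝒜 0)
    (hRmul : ∀ i j : ℤ, ∀ a ∈ 𝒜 i, ∀ b ∈ 𝒜 j, a * b ∈ 𝒜 (i + j))
    (hRcomm : ∀ i j : ℤ, ∀ a ∈ 𝒜 i, ∀ b ∈ 𝒜 j, a * b = ((-1 : ℝ) ^ (i * j)) • (b * a))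
    (hRnonneg : ∀ i : ℤ, i < 0 → 𝒜 i = ⊥)
    -- the differential d_R on R, of degree +1, with kernel ℝ·1 on R⁰
    (dR : R →ₗ[ℝ] R)
    (hdRdeg : ∀ i : ℤ, ∀ a ∈ 𝒜 i, dR a ∈ 𝒜 (i + 1))
    (hdRsq : dR ∘ₗ dR = 0)
    (hdRLeib : ∀ i : ℤ, ∀ a ∈ 𝒜 i, ∀ b : R,
      dR (a * b) = dR a * b + ((-1 : ℝ) ^ i) • (a * dR b))
    (hH0 : ∀ a ∈ 𝒜 0, (dR a = 0 ↔ ∃ c : ℝ, a = algebraMap ℝ R c))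
    -- V: finite-dimensional ℤ-graded real vector space
    (V : Type) [AddCommGroup V] [Module ℝ V] [FiniteDimensional ℝ V]
    (𝒱 : ℤ → Submodule ℝ V) (hVinternal : DirectSum.IsInternal 𝒱)
    -- the R-bilinear pairing of degree −d on M = R ⊗ V
    (d : ℤ)
    (B : TensorProduct ℝ R V →ₗ[ℝ] TensorProduct ℝ R V →ₗ[ℝ] R)
    (hBdeg : ∀ a b : ℤ, ∀ x ∈ gradedPiece R V 𝒜 𝒱 a, ∀ y ∈ gradedPiece R V 𝒜 𝒱 b,
      B x y ∈ 𝒜 (a + b - d))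
    (hBl : ∀ (r : R) (x y : TensorProduct ℝ R V), B (rsmul R V r x) y = r * B x y)
    (hBr : ∀ (i a : ℤ), ∀ r ∈ 𝒜 i, ∀ x ∈ gradedPiece R V 𝒜 𝒱 a,
      ∀ y : TensorProduct ℝ R V,
      B x (rsmul R V r y) = ((-1 : ℝ) ^ (i * a)) • (r * B x y))
    -- the differential D on M, of degree +1, squaring to zero, Leibniz over (R, d_R)
    (D : TensorProduct ℝ R V →ₗ[ℝ] TensorProduct ℝ R V)
    (hDdeg : ∀ n : ℤ, ∀ x ∈ gradedPiece R V 𝒜 𝒱 n, D x ∈ gradedPiece R V 𝒜 𝒱 (n + 1))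
    (hDsq : D ∘ₗ D = 0)
    (hDLeib : ∀ i : ℤ, ∀ r ∈ 𝒜 i, ∀ m : TensorProduct ℝ R V,
      D (rsmul R V r m) = rsmul R V (dR r) m + ((-1 : ℝ) ^ i) • rsmul R V r (D m))
    -- compatibility of the pairing with D
    (hBD : ∀ a : ℤ, ∀ x ∈ gradedPiece R V 𝒜 𝒱 a, ∀ y : TensorProduct ℝ R V,
      dR (B x y) = B (D x) y + ((-1 : ℝ) ^ a) • B x (D y))
    -- D(1 ⊗ V) ⊆ R^{≥2} ⊗ V
    (hDV : ∀ v : V, D ((1 : R) ⊗ₜ[ℝ] v) ∈ spanDegGE R V 𝒜 2) :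
    ∀ (a b : ℤ), ∀ v ∈ 𝒱 a, ∀ w ∈ 𝒱 b, a + b = d →
      ∃ c : ℝ, B ((1 : R) ⊗ₜ[ℝ] v) ((1 : R) ⊗ₜ[ℝ] w) = algebraMap ℝ R c := by
  intro a b v hv w hw hab
  classical
  -- S : span of elements of degree ≥ 2
  set S : Submodule ℝ R := Submodule.span ℝ {x : R | ∃ n : ℤ, 2 ≤ n ∧ x ∈ 𝒜 n} with hS
  -- multiplication by a degree ≥ 2 element lands in S
  have mulS : ∀ i : ℤ, 2 ≤ i → ∀ r ∈ 𝒜 i, ∀ s : R, r * s ∈ S := by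
    intro i hi r hr s
    have hs : s ∈ ⨆ n : ℤ, 𝒜 n := by
      rw [hRinternal.submodule_iSup_eq_top]; trivial
    refine Submodule.iSup_induction 𝒜 (motive := fun s => r * s ∈ S) hs ?_ ?_ ?_
    · intro j x hx
      by_cases hj : 0 ≤ j
      · exact Submodule.subset_span ⟨i + j, by omega, hRmul i j r hr x hx⟩
      · have : x = 0 := by
          have := hRnonneg j (by omega)
          simpa [this] using hx
        simp [this]
    · simp
    · intro x y hx hy
      simpa [mul_add] using S.add_mem hx hy
  -- 1 ⊗ v is in graded piece a, 1 ⊗ w in graded piece b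
  have h1v : (1 : R) ⊗ₜ[ℝ] v ∈ gradedPiece R V 𝒜 𝒱 a :=
    Submodule.subset_span ⟨0, a, 1, v, by omega, hRone, hv, rfl⟩
  have h1w : (1 : R) ⊗ₜ[ℝ] w ∈ gradedPiece R V 𝒜 𝒱 b :=
    Submodule.subset_span ⟨0, b, 1, w, by omega, hRone, hw, rfl⟩
  -- p ∈ 𝒜 0
  set p : R := B ((1 : R) ⊗ₜ[ℝ] v) ((1 : R) ⊗ₜ[ℝ] w) with hp
  have hp0 : p ∈ 𝒜 0 := by
    have := hBdeg a b _ h1v _ h1w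
    rwa [show a + b - d = 0 by omega] at this
  -- rsmul r (1 ⊗ v') = r ⊗ v'
  have hrs : ∀ (r : R) (v' : V), rsmul R V r ((1 : R) ⊗ₜ[ℝ] v') = r ⊗ₜ[ℝ] v' := by
    intro r v'; simp [rsmul]
  -- first term in S
  have hT1 : B (D ((1 : R) ⊗ₜ[ℝ] v)) ((1 : R) ⊗ₜ[ℝ] w) ∈ S := by
    have hmem := hDV v
    refine Submodule.span_induction
      (p := fun x _ => B x ((1 : R) ⊗ₜ[ℝ] w) ∈ S) ?_ ?_ ?_ ?_ hmem
    · rintro x ⟨i, r, v', hi, hr, rfl⟩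
      rw [← hrs r v', hBl]
      exact mulS i hi r hr _
    · simp
    · intro x y _ _ hx hy
      simpa using S.add_mem hx hy
    · intro c x _ hx
      simpa using S.smul_mem c hx
  -- second term in S
  have hT2 : B ((1 : R) ⊗ₜ[ℝ] v) (D ((1 : R) ⊗ₜ[ℝ] w)) ∈ S := by
    have hmem := hDV w
    refine Submodule.span_induction
      (p := fun y _ => B ((1 : R) ⊗ₜ[ℝ] v) y ∈ S) ?_ ?_ ?_ ?_ hmem
    · rintro y ⟨i, r, v', hi, hr, rfl⟩
      rw [← hrs r v', hBr i a r hr _ h1v]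
      exact S.smul_mem _ (mulS i hi r hr _)
    · simp
    · intro x y _ _ hx hy
      simpa using S.add_mem hx hy
    · intro c x _ hx
      simpa using S.smul_mem c hx
  -- dR p ∈ S
  have hdRpS : dR p ∈ S := by
    rw [hp, hBD a _ h1v]
    exact S.add_mem hT1 (S.smul_mem _ hT2)
  -- dR p ∈ 𝒜 1
  have hdRp1 : dR p ∈ 𝒜 1 := by
    have := hdRdeg 0 p hp0; simpa using this
  -- S ≤ ⨆ j ≠ 1, 𝒜 j
  have hSle : S ≤ ⨆ j, ⨆ _ : j ≠ (1 : ℤ), 𝒜 j := by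
    rw [hS, Submodule.span_le]
    rintro x ⟨n, hn, hx⟩
    exact Submodule.mem_iSup_of_mem n (Submodule.mem_iSup_of_mem (by omega) hx)
  -- independence forces dR p = 0
  have hdisj := hRinternal.submodule_iSupIndep 1
  have hdRp0 : dR p = 0 := by
    have := (Submodule.disjoint_def.mp hdisj) (dR p) hdRp1 (hSle hdRpS)
    exact this
  exact (hH0 p hp0).mp hdRp0
end

section
/- Let R be a ℤ-graded-commutative unital ℝ-algebra concentrated in non-negative degrees, with differential d_R of degree +1 whose kernel on R⁰ is ℝ·1 and with an augmentation ε : R → ℝ; let V be a finite-dimensional ℤ-graded real vector space, let M = R ⊗ V carry a differential D of degree +1 satisfying D² = 0 and the graded Leibniz rule over (R, d_R) with D(1⊗V) ⊆ R^{≥2} ⊗ V, and let ⟨,⟩ be a nondegenerate, graded-symmetric, R-bilinear pairing of degree −d on M compatible with D. Then there exists a degree-0 R-linear isomorphism f : M → M such that f(1⊗v) − 1⊗v ∈ R^{>0} ⊗ V for all v ∈ V (i.e. f reduces to the identity of V modulo the augmentation ideal) and such that for all x, y ∈ M, ⟨f(x), f(y)⟩ = ⟨x, y⟩₀, where ⟨,⟩₀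 is the R-bilinear extension to M of the induced pairing ⟨v,w⟩_V := ε(⟨1⊗v, 1⊗w⟩) on V, i.e. ⟨r⊗v, s⊗w⟩₀ = (−1)^{|s||v|} r s ⟨v,w⟩_V for homogeneous r, s ∈ R and v, w ∈ V. -/
open TensorProduct

variable {N : ℕ} {R V : Type} [Ring R] [Algebra ℝ R] [AddCommGroup V] [Module ℝ V]

theorem rsmul_tmul (r s : R) (v : V) : rsmul R V r (s ⊗ₜ[ℝ] v) = (r * s) ⊗ₜ[ℝ] v := rfl

theorem rsmul_tmul' (r : R) (v : V) : rsmul R V r ((1:R) ⊗ₜ[ℝ] v) = r ⊗ₜ[ℝ] v := by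
  rw [rsmul_tmul, mul_one]

/-- the `R`-linear endomorphism of `M = R ⊗ V` with "matrix" `P` in basis `bV`:
`r ⊗ bV k ↦ ∑ i, (r * P i k) ⊗ bV i`. -/
noncomputable def mkMat (bV : Module.Basis (Fin N) ℝ V) (P : Matrix (Fin N) (Fin N) R) :
    TensorProduct ℝ R V →ₗ[ℝ] TensorProduct ℝ R V :=
  TensorProduct.lift (LinearMap.mk₂ ℝ
    (fun r v => ∑ k, ∑ i, bV.repr v k • ((r * P i k) ⊗ₜ[ℝ] bV i))
    (by
      intro r₁ r₂ v
      rw [← Finset.sum_add_distrib]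
      refine Finset.sum_congr rfl fun k _ => ?_
      rw [← Finset.sum_add_distrib]
      refine Finset.sum_congr rfl fun i _ => ?_
      rw [add_mul, add_tmul, smul_add])
    (by
      intro c r v
      rw [Finset.smul_sum]
      refine Finset.sum_congr rfl fun k _ => ?_
      rw [Finset.smul_sum]
      refine Finset.sum_congr rfl fun i _ => ?_
      simp only [smul_mul_assoc, ← smul_tmul', smul_comm c])
    (by
      intro r v₁ v₂
      rw [← Finset.sum_add_distrib]
      refine Finset.sum_congr rfl fun k _ => ?_
      rw [← Finset.sum_add_distrib]
      refine Finset.sum_congr rfl fun i _ => ?_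
      rw [map_add, Finsupp.add_apply, add_smul])
    (by
      intro c r v
      rw [Finset.smul_sum]
      refine Finset.sum_congr rfl fun k _ => ?_
      rw [Finset.smul_sum]
      refine Finset.sum_congr rfl fun i _ => ?_
      rw [map_smul, Finsupp.smul_apply, smul_assoc]))

theorem mkMat_tmul (bV : Module.Basis (Fin N) ℝ V) (P : Matrix (Fin N) (Fin N) R) (r : R) (v : V) :
    mkMat bV P (r ⊗ₜ[ℝ] v) = ∑ k, ∑ i, bV.repr v k • ((r * P i k) ⊗ₜ[ℝ] bV i) := rfl

theorem mkMat_tmul_basis (bV : Module.Basis (Fin N) ℝ V) (P : Matrix (Fin N) (Fin N) R) (r : R)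
    (k : Fin N) : mkMat bV P (r ⊗ₜ[ℝ] bV k) = ∑ i, (r * P i k) ⊗ₜ[ℝ] bV i := by
  rw [mkMat_tmul]
  rw [Finset.sum_eq_single k]
  · simp [Module.Basis.repr_self]
  · intro b _ hb
    simp [Module.Basis.repr_self, Finsupp.single_apply, Ne.symm hb]
  · simp

theorem mkMat_add (bV : Module.Basis (Fin N) ℝ V) (P Q : Matrix (Fin N) (Fin N) R) :
    mkMat bV (P + Q) = mkMat bV P + mkMat bV Q := by
  apply TensorProduct.ext'
  intro r v
  simp only [mkMat_tmul, LinearMap.add_apply, Matrix.add_apply, mul_add, add_tmul, smul_add,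
    Finset.sum_add_distrib]

theorem mkMat_one (bV : Module.Basis (Fin N) ℝ V) :
    mkMat bV (1 : Matrix (Fin N) (Fin N) R) = LinearMap.id := by
  apply TensorProduct.ext'
  intro r v
  rw [mkMat_tmul, LinearMap.id_apply]
  have : ∀ k : Fin N, (∑ i, bV.repr v k • ((r * (1 : Matrix (Fin N) (Fin N) R) i k) ⊗ₜ[ℝ] bV i))
      = bV.repr v k • (r ⊗ₜ[ℝ] bV k) := by
    intro k
    rw [Finset.sum_eq_single k]
    · simp [Matrix.one_apply]
    · intro b _ hb; simp [Matrix.one_apply, hb]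
    · simp
  rw [Finset.sum_congr rfl fun k _ => this k]
  simp_rw [← tmul_smul]
  rw [← tmul_sum, Module.Basis.sum_repr]

theorem mkMat_zero (bV : Module.Basis (Fin N) ℝ V) :
    mkMat bV (0 : Matrix (Fin N) (Fin N) R) = 0 := by
  apply TensorProduct.ext'
  intro r v
  simp only [mkMat_tmul, Matrix.zero_apply, mul_zero, zero_tmul, smul_zero,
    Finset.sum_const_zero, LinearMap.zero_apply]

theorem mkMat_rsmul (bV : Module.Basis (Fin N) ℝ V) (P : Matrix (Fin N) (Fin N) R) (r : R)
    (x : TensorProduct ℝ R V) : mkMat bV P (rsmul R V r x) = rsmul R V r (mkMat bV P x) := by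
  induction x using TensorProduct.induction_on with
  | zero => simp
  | tmul s v =>
      rw [rsmul_tmul, mkMat_tmul, mkMat_tmul, map_sum]
      refine Finset.sum_congr rfl fun k _ => ?_
      rw [map_sum]
      refine Finset.sum_congr rfl fun i _ => ?_
      rw [map_smul, rsmul_tmul, mul_assoc]
  | add x y hx hy => simp [map_add, hx, hy]

theorem mkMat_comp (bV : Module.Basis (Fin N) ℝ V) (P Q : Matrix (Fin N) (Fin N) R) :
    (mkMat bV P) ∘ₗ (mkMat bV Q) = mkMat bV (Matrix.of fun i k => ∑ j, Q j k * P i j) := by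
  apply TensorProduct.ext'
  intro r v
  rw [LinearMap.comp_apply, mkMat_tmul, mkMat_tmul, map_sum]
  refine Finset.sum_congr rfl fun k _ => ?_
  rw [map_sum]
  simp_rw [map_smul, mkMat_tmul_basis, Matrix.of_apply, Finset.mul_sum, sum_tmul,
    Finset.smul_sum, mul_assoc]
  exact Finset.sum_comm

/-- the vector `∑ i, A i k ⊗ bV i` in `M = R ⊗ V`. -/
noncomputable def xvec (bV : Module.Basis (Fin N) ℝ V) (A : Matrix (Fin N) (Fin N) R) (k : Fin N) :
    TensorProduct ℝ R V := ∑ i, A i k ⊗ₜ[ℝ] bV i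

theorem xvec_one (bV : Module.Basis (Fin N) ℝ V) (k : Fin N) :
    xvec bV (1 : Matrix (Fin N) (Fin N) R) k = (1 : R) ⊗ₜ[ℝ] bV k := by
  rw [xvec, Finset.sum_eq_single k]
  · simp [Matrix.one_apply]
  · intro b _ hb; simp [Matrix.one_apply, hb]
  · simp

theorem mkMat_one_tmul_basis (bV : Module.Basis (Fin N) ℝ V) (A : Matrix (Fin N) (Fin N) R)
    (k : Fin N) : mkMat bV A ((1 : R) ⊗ₜ[ℝ] bV k) = xvec bV A k := by
  rw [mkMat_tmul_basis, xvec]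
  exact Finset.sum_congr rfl fun i _ => by rw [one_mul]

theorem xvec_correct (bV : Module.Basis (Fin N) ℝ V) (A C : Matrix (Fin N) (Fin N) R) (k : Fin N) :
    xvec bV (Matrix.of fun i k => A i k - ∑ j, C j k * A i j) k
      = xvec bV A k - ∑ j, rsmul R V (C j k) (xvec bV A j) := by
  rw [xvec, xvec]
  simp_rw [Matrix.of_apply, sub_tmul, sum_tmul, Finset.sum_sub_distrib]
  congr 1
  rw [Finset.sum_comm]
  refine Finset.sum_congr rfl fun j _ => ?_
  rw [xvec, map_sum]
  exact Finset.sum_congr rfl fun i _ => (rsmul_tmul _ _ _).symm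


set_option maxHeartbeats 3200000 in
theorem pairing_trivialization
    -- R: ℤ-graded-commutative unital ℝ-algebra concentrated in non-negative degrees
    (R : Type) [Ring R] [Algebra ℝ R]
    (𝒜 : ℤ → Submodule ℝ R)
    (hRinternal : DirectSum.IsInternal 𝒜)
    (hRone : (1 : R) ∈ 𝒜 0)
    (hRmul : ∀ i j : ℤ, ∀ a ∈ 𝒜 i, ∀ b ∈ 𝒜 j, a * b ∈ 𝒜 (i + j))
    (hRcomm : ∀ i j : ℤ, ∀ a ∈ 𝒜 i, ∀ b ∈ 𝒜 j, a * b = ((-1 : ℝ) ^ (i * j)) • (b * a))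
    (hRnonneg : ∀ i : ℤ, i < 0 → 𝒜 i = ⊥)
    -- the differential d_R on R, of degree +1, with kernel ℝ·1 on R⁰
    (dR : R →ₗ[ℝ] R)
    (hdRdeg : ∀ i : ℤ, ∀ a ∈ 𝒜 i, dR a ∈ 𝒜 (i + 1))
    (hdRsq : dR ∘ₗ dR = 0)
    (hdRLeib : ∀ i : ℤ, ∀ a ∈ 𝒜 i, ∀ b : R,
      dR (a * b) = dR a * b + ((-1 : ℝ) ^ i) • (a * dR b))
    (hH0 : ∀ a ∈ 𝒜 0, (dR a = 0 ↔ ∃ c : ℝ, a = algebraMap ℝ R c))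
    -- the augmentation ε : R → ℝ, vanishing in positive degrees
    (ε : R →ₐ[ℝ] ℝ)
    (hεpos : ∀ i : ℤ, 0 < i → ∀ a ∈ 𝒜 i, ε a = 0)
    -- V: finite-dimensional ℤ-graded real vector space
    (V : Type) [AddCommGroup V] [Module ℝ V] [FiniteDimensional ℝ V]
    (𝒱 : ℤ → Submodule ℝ V) (hVinternal : DirectSum.IsInternal 𝒱)
    -- the R-bilinear pairing of degree −d on M = R ⊗ V, graded-symmetric
    (d : ℤ)
    (B : TensorProduct ℝ R V →ₗ[ℝ] TensorProduct ℝ R V →ₗ[ℝ] R)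
    (hBdeg : ∀ a b : ℤ, ∀ x ∈ gradedPiece R V 𝒜 𝒱 a, ∀ y ∈ gradedPiece R V 𝒜 𝒱 b,
      B x y ∈ 𝒜 (a + b - d))
    (hBl : ∀ (r : R) (x y : TensorProduct ℝ R V), B (rsmul R V r x) y = r * B x y)
    (hBr : ∀ (i a : ℤ), ∀ r ∈ 𝒜 i, ∀ x ∈ gradedPiece R V 𝒜 𝒱 a,
      ∀ y : TensorProduct ℝ R V,
      B x (rsmul R V r y) = ((-1 : ℝ) ^ (i * a)) • (r * B x y))
    (hBsym : ∀ a b : ℤ, ∀ x ∈ gradedPiece R V 𝒜 𝒱 a, ∀ y ∈ gradedPiece R V 𝒜 𝒱 b,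
      B x y = ((-1 : ℝ) ^ (a * b)) • B y x)
    -- nondegeneracy: the Gram matrix of some homogeneous basis of V is invertible over R
    (N : ℕ) (bV : Module.Basis (Fin N) ℝ V) (deg : Fin N → ℤ)
    (hbV : ∀ i, bV i ∈ 𝒱 (deg i))
    (hBnd : IsUnit (Matrix.of fun i j : Fin N =>
      B ((1 : R) ⊗ₜ[ℝ] bV i) ((1 : R) ⊗ₜ[ℝ] bV j)))
    -- the differential D on M, of degree +1, squaring to zero, Leibniz over (R, d_R)
    (D : TensorProduct ℝ R V →ₗ[ℝ] TensorProduct ℝ R V)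
    (hDdeg : ∀ n : ℤ, ∀ x ∈ gradedPiece R V 𝒜 𝒱 n, D x ∈ gradedPiece R V 𝒜 𝒱 (n + 1))
    (hDsq : D ∘ₗ D = 0)
    (hDLeib : ∀ i : ℤ, ∀ r ∈ 𝒜 i, ∀ m : TensorProduct ℝ R V,
      D (rsmul R V r m) = rsmul R V (dR r) m + ((-1 : ℝ) ^ i) • rsmul R V r (D m))
    -- D(1 ⊗ V) ⊆ R^{≥2} ⊗ V
    (hDV : ∀ v : V, D ((1 : R) ⊗ₜ[ℝ] v) ∈ spanDegGE R V 𝒜 2)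
    -- compatibility of the pairing with D
    (hBD : ∀ a : ℤ, ∀ x ∈ gradedPiece R V 𝒜 𝒱 a, ∀ y : TensorProduct ℝ R V,
      dR (B x y) = B (D x) y + ((-1 : ℝ) ^ a) • B x (D y)) :
    ∃ f : TensorProduct ℝ R V →ₗ[ℝ] TensorProduct ℝ R V,
      -- f is an isomorphism
      Function.Bijective f ∧
      -- f is R-linear
      (∀ (r : R) (x : TensorProduct ℝ R V), f (rsmul R V r x) = rsmul R V r (f x)) ∧
      -- f has degree 0
      (∀ n : ℤ, ∀ x ∈ gradedPiece R V 𝒜 𝒱 n, f x ∈ gradedPiece R V 𝒜 𝒱 n) ∧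
      -- f reduces to the identity of V modulo the augmentation ideal
      (∀ v : V, f ((1 : R) ⊗ₜ[ℝ] v) - (1 : R) ⊗ₜ[ℝ] v ∈ spanDegGE R V 𝒜 1) ∧
      -- ⟨f(x), f(y)⟩ = ⟨x, y⟩₀ (stated on homogeneous generators of M)
      (∀ (i j a b : ℤ) (r s : R) (v w : V), r ∈ 𝒜 i → s ∈ 𝒜 j → v ∈ 𝒱 a → w ∈ 𝒱 b →
        B (f (r ⊗ₜ[ℝ] v)) (f (s ⊗ₜ[ℝ] w)) =
          ((-1 : ℝ) ^ (j * a)) •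
            (r * s * algebraMap ℝ R (ε (B ((1 : R) ⊗ₜ[ℝ] v) ((1 : R) ⊗ₜ[ℝ] w))))) := by
  
  classical
  -- abbreviations
  set M := TensorProduct ℝ R V
  have hneg1 : (-1 : ℝ) ≠ 0 := by norm_num
  have hsgn : ∀ z : ℤ, Even z → ((-1 : ℝ) ^ z) = 1 := fun z hz => hz.neg_one_zpow
  -- homogeneous generators of M
  have htmulmem : ∀ (i j : ℤ) (r : R) (v : V), r ∈ 𝒜 i → v ∈ 𝒱 j →
      r ⊗ₜ[ℝ] v ∈ gradedPiece R V 𝒜 𝒱 (i + j) := fun i j r v hr hv =>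
    Submodule.subset_span ⟨i, j, r, v, rfl, hr, hv, rfl⟩
  have hedeg : ∀ k : Fin N, (1 : R) ⊗ₜ[ℝ] bV k ∈ gradedPiece R V 𝒜 𝒱 (deg k) := by
    intro k
    have := htmulmem 0 (deg k) 1 (bV k) hRone (hbV k)
    rwa [zero_add] at this
  have halgmem : ∀ c : ℝ, algebraMap ℝ R c ∈ 𝒜 0 := by
    intro c
    rw [Algebra.algebraMap_eq_smul_one]
    exact Submodule.smul_mem _ _ hRone
  have hbotA : ∀ (i : ℤ) (a : R), i < 0 → a ∈ 𝒜 i → a = 0 := by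
    intro i a hi ha
    rw [hRnonneg i hi] at ha
    exact ha
  -- the subspace R^{≥2} of R
  set Rge2 : Submodule ℝ R := ⨆ (i : ℤ) (_ : (2:ℤ) ≤ i), 𝒜 i with hRge2
  have hmul2 : ∀ i : ℤ, 2 ≤ i → ∀ a ∈ 𝒜 i, ∀ b : R, a * b ∈ Rge2 := by
    intro i hi a ha b
    have hb : b ∈ ⨆ i, 𝒜 i := by
      rw [hRinternal.submodule_iSup_eq_top]; exact Submodule.mem_top
    refine Submodule.iSup_induction (motive := fun z => a * z ∈ Rge2) 𝒜 hb ?_ ?_ ?_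
    · intro j x hx
      by_cases hj : 0 ≤ j
      · exact Submodule.mem_iSup_of_mem (i + j) (Submodule.mem_iSup_of_mem (by omega)
          (hRmul i j a ha x hx))
      · rw [hbotA j x (by omega) hx, mul_zero]; exact Submodule.zero_mem _
    · show a * 0 ∈ Rge2
      rw [mul_zero]; exact Submodule.zero_mem _
    · intro x y hx hy
      show a * (x + y) ∈ Rge2
      rw [mul_add]; exact Submodule.add_mem _ hx hy
  have hdisj12 : ∀ a : R, a ∈ 𝒜 1 → a ∈ Rge2 → a = 0 := by
    intro a h1 h2
    have hd := hRinternal.submodule_iSupIndep (1 : ℤ)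
    have hle : Rge2 ≤ ⨆ (j : ℤ) (_ : j ≠ 1), 𝒜 j := by
      refine iSup₂_le fun i hi => ?_
      exact le_iSup₂ (f := fun (j : ℤ) (_ : j ≠ 1) => 𝒜 j) i (by omega)
    exact Submodule.disjoint_def.mp hd a h1 (hle h2)
  -- pairing with one slot in spanDegGE 2 lands in R^{≥2}
  have hBleft2 : ∀ z ∈ spanDegGE R V 𝒜 2, ∀ y : M, B z y ∈ Rge2 := by
    intro z hz y
    induction hz using Submodule.span_induction with
    | mem m hm =>
        obtain ⟨i, r, v, hi, hr, rfl⟩ := hm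
        rw [← rsmul_tmul' r v, hBl]
        exact hmul2 i hi r hr _
    | zero => rw [map_zero, LinearMap.zero_apply]; exact Submodule.zero_mem _
    | add x₁ y₁ _ _ h1 h2 =>
        rw [map_add, LinearMap.add_apply]; exact Submodule.add_mem _ h1 h2
    | smul c x₁ _ h1 =>
        rw [map_smul, LinearMap.smul_apply]; exact Submodule.smul_mem _ _ h1
  have hBright2 : ∀ (n : ℤ) (x : M), x ∈ gradedPiece R V 𝒜 𝒱 n →
      ∀ z ∈ spanDegGE R V 𝒜 2, B x z ∈ Rge2 := by
    intro n x hx z hz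
    induction hz using Submodule.span_induction with
    | mem m hm =>
        obtain ⟨i, r, v, hi, hr, rfl⟩ := hm
        rw [← rsmul_tmul' r v, hBr i n r hr x hx]
        exact Submodule.smul_mem _ _ (hmul2 i hi r hr _)
    | zero => rw [map_zero]; exact Submodule.zero_mem _
    | add x₁ y₁ _ _ h1 h2 => rw [map_add]; exact Submodule.add_mem _ h1 h2
    | smul c x₁ _ h1 => rw [map_smul]; exact Submodule.smul_mem _ _ h1
  -- the scalar Gram matrix
  set g0 : Fin N → Fin N → ℝ := fun k l => ε (B ((1:R) ⊗ₜ[ℝ] bV k) ((1:R) ⊗ₜ[ℝ] bV l)) with hg0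
  have hBdeg' : ∀ k l : Fin N,
      B ((1:R) ⊗ₜ[ℝ] bV k) ((1:R) ⊗ₜ[ℝ] bV l) ∈ 𝒜 (deg k + deg l - d) :=
    fun k l => hBdeg _ _ _ (hedeg k) _ (hedeg l)
  have hg0supp : ∀ k l : Fin N, deg k + deg l ≠ d → g0 k l = 0 := by
    intro k l h
    rcases lt_or_gt_of_ne (show deg k + deg l - d ≠ 0 by omega) with hlt | hgt
    · rw [hg0]
      simp only []
      rw [hbotA _ _ hlt (hBdeg' k l), map_zero]
    · exact hεpos _ (by omega) _ (hBdeg' k l)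
  have hg0symm : ∀ k l : Fin N, g0 k l = ((-1:ℝ) ^ (deg k * deg l)) * g0 l k := by
    intro k l
    rw [hg0]
    simp only []
    rw [hBsym _ _ _ (hedeg k) _ (hedeg l), map_smul, smul_eq_mul]
  -- base case: degree-0 entries of the Gram matrix are scalars
  have hGram0 : ∀ k l : Fin N, deg k + deg l - d < 1 →
      B ((1:R) ⊗ₜ[ℝ] bV k) ((1:R) ⊗ₜ[ℝ] bV l) = algebraMap ℝ R (g0 k l) := by
    intro k l h
    rcases lt_or_eq_of_le (show deg k + deg l - d ≤ 0 by omega) with hlt | he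
    · have hB0 : B ((1:R) ⊗ₜ[ℝ] bV k) ((1:R) ⊗ₜ[ℝ] bV l) = 0 :=
        hbotA _ _ hlt (hBdeg' k l)
      rw [hB0, hg0]
      simp only []
      rw [hB0, map_zero, map_zero]
    · have hG0 : B ((1:R) ⊗ₜ[ℝ] bV k) ((1:R) ⊗ₜ[ℝ] bV l) ∈ 𝒜 0 := by
        rw [← he]; exact hBdeg' k l
      have hdeg1 : dR (B ((1:R) ⊗ₜ[ℝ] bV k) ((1:R) ⊗ₜ[ℝ] bV l)) ∈ 𝒜 1 := by
        have := hdRdeg 0 _ hG0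
        rwa [zero_add] at this
      have hcomp := hBD (deg k) _ (hedeg k) ((1:R) ⊗ₜ[ℝ] bV l)
      have hY : dR (B ((1:R) ⊗ₜ[ℝ] bV k) ((1:R) ⊗ₜ[ℝ] bV l)) ∈ Rge2 := by
        rw [hcomp]
        exact Submodule.add_mem _ (hBleft2 _ (hDV (bV k)) _)
          (Submodule.smul_mem _ _ (hBright2 (deg k) _ (hedeg k) _ (hDV (bV l))))
      obtain ⟨c, hc⟩ := (hH0 _ hG0).mp (hdisj12 _ hdeg1 hY)
      have : g0 k l = c := by
        rw [hg0]
        simp only []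
        rw [hc, AlgHom.commutes]
        exact Algebra.algebraMap_self_apply c
      rw [this, ← hc]
  have halgsmul : ∀ (c y : ℝ), algebraMap ℝ R (c * y) = c • algebraMap ℝ R y := by
    intro c y; rw [map_mul, ← Algebra.smul_def]
  -- the inverse scalar Gram matrix
  set g0M : Matrix (Fin N) (Fin N) ℝ := Matrix.of fun k l => g0 k l with hg0M
  have hg0Munit : IsUnit g0M := by
    have he : g0M = (ε.toRingHom.mapMatrix)
        (Matrix.of fun i j => B ((1:R) ⊗ₜ[ℝ] bV i) ((1:R) ⊗ₜ[ℝ] bV j)) := by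
      ext i j
      simp [hg0M, hg0, RingHom.mapMatrix_apply, Matrix.map_apply]
    rw [he]; exact hBnd.map _
  obtain ⟨u, hu⟩ := hg0Munit
  set γ : Matrix (Fin N) (Fin N) ℝ := ↑u⁻¹ with hγdef
  have hγ : ∀ m l : Fin N, (∑ j, γ m j * g0 j l) = if m = l then (1:ℝ) else 0 := by
    intro m l
    have h1 : γ * g0M = 1 := by
      rw [hγdef, ← hu]
      exact u.inv_mul
    have h2 := congrArg (fun Mx : Matrix (Fin N) (Fin N) ℝ => Mx m l) h1
    simpa [Matrix.mul_apply, Matrix.one_apply, hg0M] using h2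
  -- main inductive construction
  have key : ∀ n : ℕ, ∃ A : Matrix (Fin N) (Fin N) R,
      (∀ i k, A i k ∈ 𝒜 (deg k - deg i)) ∧
      (∀ i k, deg i = deg k → A i k = if i = k then (1:R) else 0) ∧
      (∀ k l, deg k + deg l - d < 1 + (n : ℤ) →
        B (xvec bV A k) (xvec bV A l) = algebraMap ℝ R (g0 k l)) := by
    intro n
    induction n with
    | zero =>
        refine ⟨1, ?_, ?_, ?_⟩
        · intro i k
          by_cases h : i = k
          · subst h; rw [Matrix.one_apply_eq, sub_self]; exact hRone
          · rw [Matrix.one_apply_ne h]; exact Submodule.zero_mem _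
        · intro i k _; exact Matrix.one_apply
        · intro k l h
          rw [xvec_one, xvec_one]
          exact hGram0 k l (by simpa using h)
    | succ n ih =>
        obtain ⟨A, hA1, hA2, hA3⟩ := ih
        set t : ℤ := 1 + (n : ℤ) with htdef
        have ht1 : 1 ≤ t := by omega
        have hxdeg : ∀ k, xvec bV A k ∈ gradedPiece R V 𝒜 𝒱 (deg k) := by
          intro k
          rw [xvec]
          refine Submodule.sum_mem _ fun i _ => ?_
          have := htmulmem (deg k - deg i) (deg i) _ _ (hA1 i k) (hbV i)
          rwa [sub_add_cancel] at this
        have hBxx : ∀ k l, B (xvec bV A k) (xvec bV A l) ∈ 𝒜 (deg k + deg l - d) :=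
          fun k l => hBdeg _ _ _ (hxdeg k) _ (hxdeg l)
        have halgg0mem : ∀ k l : Fin N, algebraMap ℝ R (g0 k l) ∈ 𝒜 (deg k + deg l - d) := by
          intro k l
          by_cases h : deg k + deg l - d = 0
          · rw [h]; exact halgmem _
          · rw [hg0supp k l (by omega), map_zero]; exact Submodule.zero_mem _
        set E : Fin N → Fin N → R :=
          fun k l => B (xvec bV A k) (xvec bV A l) - algebraMap ℝ R (g0 k l) with hEdef
        have hBE : ∀ k l, B (xvec bV A k) (xvec bV A l) = algebraMap ℝ R (g0 k l) + E k l := by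
          intro k l; simp only [hEdef]; abel
        have hEdeg : ∀ k l, E k l ∈ 𝒜 (deg k + deg l - d) :=
          fun k l => Submodule.sub_mem _ (hBxx k l) (halgg0mem k l)
        have hEsymm : ∀ k l, E l k = ((-1:ℝ) ^ (deg k * deg l)) • E k l := by
          intro k l
          rw [hEdef]
          simp only []
          rw [hBsym _ _ _ (hxdeg l) _ (hxdeg k), hg0symm l k, halgsmul, ← smul_sub,
            mul_comm (deg l) (deg k)]
        set C : Matrix (Fin N) (Fin N) R := Matrix.of fun j k => (2⁻¹:ℝ) •
          ∑ m, if deg k + deg m = d + t ∧ deg m + deg j = d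
            then E k m * algebraMap ℝ R (γ m j) else 0 with hCdef
        have hCzero : ∀ j k, deg k - deg j ≠ t → C j k = 0 := by
          intro j k h
          rw [hCdef]
          simp only [Matrix.of_apply]
          rw [Finset.sum_eq_zero, smul_zero]
          intro m _
          rw [if_neg]
          rintro ⟨h1, h2⟩
          omega
        have hCt : ∀ j k, C j k ∈ 𝒜 t := by
          intro j k
          rw [hCdef]
          simp only [Matrix.of_apply]
          refine Submodule.smul_mem _ _ (Submodule.sum_mem _ fun m _ => ?_)
          by_cases h : deg k + deg m = d + t ∧ deg m + deg j = d
          · rw [if_pos h]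
            have h1 : deg k + deg m - d = t := by omega
            have := hRmul t 0 _ (h1 ▸ hEdeg k m) _ (halgmem (γ m j))
            rwa [add_zero] at this
          · rw [if_neg h]; exact Submodule.zero_mem _
        have hCdeg : ∀ j k, C j k ∈ 𝒜 (deg k - deg j) := by
          intro j k
          by_cases h : deg k - deg j = t
          · rw [h]; exact hCt j k
          · rw [hCzero j k h]; exact Submodule.zero_mem _
        refine ⟨Matrix.of fun i k => A i k - ∑ j, C j k * A i j, ?_, ?_, ?_⟩
        · intro i k
          simp only [Matrix.of_apply]
          refine Submodule.sub_mem _ (hA1 i k) (Submodule.sum_mem _ fun j _ => ?_)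
          have := hRmul _ _ _ (hCdeg j k) _ (hA1 i j)
          rwa [sub_add_sub_cancel] at this
        · intro i k h
          simp only [Matrix.of_apply]
          rw [hA2 i k h, Finset.sum_eq_zero, sub_zero]
          intro j _
          by_cases hj : deg k - deg j = t
          · rw [hbotA (deg j - deg i) _ (by omega) (hA1 i j), mul_zero]
          · rw [hCzero j k hj, zero_mul]
        · intro k l hkl
          have hkl' : deg k + deg l - d ≤ t := by
            push_cast at hkl
            omega
          rw [xvec_correct bV A C k, xvec_correct bV A C l]
          have hck : ∀ (k' : Fin N) (y : TensorProduct ℝ R V),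
              B (∑ j, rsmul R V (C j k') (xvec bV A j)) y
                = ∑ j, C j k' * B (xvec bV A j) y := by
            intro k' y
            rw [map_sum, LinearMap.sum_apply]
            exact Finset.sum_congr rfl fun j _ => hBl _ _ _
          have hcr : ∀ (m : ℤ) (z : TensorProduct ℝ R V), z ∈ gradedPiece R V 𝒜 𝒱 m →
              ∀ l' : Fin N, B z (∑ j, rsmul R V (C j l') (xvec bV A j))
                = ∑ j, ((-1:ℝ) ^ (t * m)) • (C j l' * B z (xvec bV A j)) := by
            intro m z hz l'
            rw [map_sum]
            exact Finset.sum_congr rfl fun j _ => hBr t m (C j l') (hCt j l') z hz _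
          have hBneg : ∀ k' l' : Fin N, deg k' + deg l' - d < 0 →
              B (xvec bV A k') (xvec bV A l') = 0 :=
            fun k' l' h => hbotA _ _ h (hBxx k' l')
          have hexp : B (xvec bV A k - ∑ j, rsmul R V (C j k) (xvec bV A j))
              (xvec bV A l - ∑ j, rsmul R V (C j l) (xvec bV A j))
              = B (xvec bV A k) (xvec bV A l)
                - B (xvec bV A k) (∑ j, rsmul R V (C j l) (xvec bV A j))
                - (B (∑ j, rsmul R V (C j k) (xvec bV A j)) (xvec bV A l)
                  - B (∑ j, rsmul R V (C j k) (xvec bV A j))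
                      (∑ j, rsmul R V (C j l) (xvec bV A j))) := by
            simp only [map_sub, LinearMap.sub_apply]
            abel
          have h4 : B (∑ j, rsmul R V (C j k) (xvec bV A j))
              (∑ j, rsmul R V (C j l) (xvec bV A j)) = 0 := by
            rw [hck]
            refine Finset.sum_eq_zero fun j _ => ?_
            by_cases hj : deg k - deg j = t
            · rw [hcr (deg j) _ (hxdeg j) l]
              rw [Finset.sum_eq_zero, mul_zero]
              intro j' _
              by_cases hj' : deg l - deg j' = t
              · rw [hBneg j j' (by omega), mul_zero, smul_zero]
              · rw [hCzero j' l hj', zero_mul, smul_zero]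
            · rw [hCzero j k hj, zero_mul]
          rcases lt_or_eq_of_le hkl' with hlt | heq2
          · -- strictly below the current degree: corrections vanish
            have h2 : B (xvec bV A k) (∑ j, rsmul R V (C j l) (xvec bV A j)) = 0 := by
              rw [hcr (deg k) _ (hxdeg k) l]
              refine Finset.sum_eq_zero fun j _ => ?_
              by_cases hj : deg l - deg j = t
              · rw [hBneg k j (by omega), mul_zero, smul_zero]
              · rw [hCzero j l hj, zero_mul, smul_zero]
            have h3 : B (∑ j, rsmul R V (C j k) (xvec bV A j)) (xvec bV A l) = 0 := by
              rw [hck]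
              refine Finset.sum_eq_zero fun j _ => ?_
              by_cases hj : deg k - deg j = t
              · rw [hBneg j l (by omega), mul_zero]
              · rw [hCzero j k hj, zero_mul]
            rw [hexp, h2, h3, h4, sub_zero, sub_zero, sub_zero]
            exact hA3 k l (by omega)
          · -- exactly the current degree: the correction halves cancel the error
            have h3 : B (∑ j, rsmul R V (C j k) (xvec bV A j)) (xvec bV A l)
                = (2⁻¹:ℝ) • E k l := by
              rw [hck]
              have step1 : ∀ j, C j k * B (xvec bV A j) (xvec bV A l)
                  = C j k * algebraMap ℝ R (g0 j l) := by
                intro j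
                by_cases hj : deg k - deg j = t
                · rw [hA3 j l (by omega)]
                · rw [hCzero j k hj, zero_mul, zero_mul]
              rw [Finset.sum_congr rfl fun j _ => step1 j]
              rw [hCdef]
              simp only [Matrix.of_apply]
              simp_rw [smul_mul_assoc, Finset.sum_mul, ite_mul, zero_mul]
              rw [← Finset.smul_sum, Finset.sum_comm]
              have hterm : ∀ m j,
                  (if deg k + deg m = d + t ∧ deg m + deg j = d
                    then E k m * algebraMap ℝ R (γ m j) * algebraMap ℝ R (g0 j l) else 0)
                  = (if deg k + deg m = d + t
                    then E k m * algebraMap ℝ R (γ m j * g0 j l) else 0) := by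
                intro m j
                by_cases h1 : deg k + deg m = d + t
                · by_cases h2 : deg m + deg j = d
                  · rw [if_pos ⟨h1, h2⟩, if_pos h1, map_mul, mul_assoc]
                  · rw [if_neg (by tauto), if_pos h1]
                    have hg : g0 j l = 0 := hg0supp j l (by omega)
                    rw [hg, mul_zero, map_zero, mul_zero]
                · rw [if_neg (by tauto), if_neg h1]
              simp_rw [hterm]
              have hcollapse : ∀ m : Fin N,
                  (∑ j, if deg k + deg m = d + t
                    then E k m * algebraMap ℝ R (γ m j * g0 j l) else 0)
                  = if m = l then E k l else 0 := by
                intro m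
                by_cases h1 : deg k + deg m = d + t
                · simp only [if_pos h1]
                  rw [← Finset.mul_sum, ← map_sum, hγ m l]
                  by_cases hml : m = l
                  · subst hml
                    rw [if_pos rfl, map_one, mul_one, if_pos rfl]
                  · rw [if_neg hml, map_zero, mul_zero, if_neg hml]
                · simp only [if_neg h1, Finset.sum_const_zero]
                  rw [if_neg]
                  intro hml
                  subst hml
                  omega
              rw [Finset.sum_congr rfl fun m _ => hcollapse m, Finset.sum_ite_eq' Finset.univ l]
              rw [if_pos (Finset.mem_univ l)]
            have h2 : B (xvec bV A k) (∑ j, rsmul R V (C j l) (xvec bV A j))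
                = (2⁻¹:ℝ) • E k l := by
              rw [hcr (deg k) _ (hxdeg k) l]
              have step1 : ∀ j, ((-1:ℝ) ^ (t * deg k)) • (C j l * B (xvec bV A k) (xvec bV A j))
                  = ((-1:ℝ) ^ (t * deg k)) • (C j l * algebraMap ℝ R (g0 k j)) := by
                intro j
                by_cases hj : deg l - deg j = t
                · rw [hA3 k j (by omega)]
                · rw [hCzero j l hj, zero_mul, zero_mul]
              rw [Finset.sum_congr rfl fun j _ => step1 j, ← Finset.smul_sum]
              rw [hCdef]
              simp only [Matrix.of_apply]
              simp_rw [smul_mul_assoc, Finset.sum_mul, ite_mul, zero_mul]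
              rw [← Finset.smul_sum, Finset.sum_comm]
              have hterm : ∀ m j,
                  (if deg l + deg m = d + t ∧ deg m + deg j = d
                    then E l m * algebraMap ℝ R (γ m j) * algebraMap ℝ R (g0 k j) else 0)
                  = ((-1:ℝ) ^ (deg k * (d - deg k))) • (if deg l + deg m = d + t
                      then E l m * algebraMap ℝ R (γ m j * g0 j k) else 0) := by
                intro m j
                by_cases h1 : deg l + deg m = d + t
                · by_cases hc2 : deg m + deg j = d
                  · rw [if_pos ⟨h1, hc2⟩, if_pos h1]
                    by_cases hg : g0 j k = 0
                    · rw [hg0symm k j, hg, mul_zero, map_zero, mul_zero, mul_zero,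
                        map_zero, mul_zero, smul_zero]
                    · have hdjk : deg j + deg k = d := by
                        by_contra hcon
                        exact hg (hg0supp j k hcon)
                      rw [hg0symm k j, show deg j = d - deg k from by omega]
                      rw [halgsmul, mul_smul_comm, map_mul, mul_assoc]
                  · rw [if_neg (by tauto), if_pos h1]
                    have hg : g0 j k = 0 := by
                      apply hg0supp
                      omega
                    rw [hg, mul_zero, map_zero, mul_zero, smul_zero]
                · rw [if_neg (by tauto), if_neg h1, smul_zero]
              simp_rw [hterm]
              simp_rw [← Finset.smul_sum]
              have hcollapse : ∀ m : Fin N,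
                  (∑ j, if deg l + deg m = d + t
                    then E l m * algebraMap ℝ R (γ m j * g0 j k) else 0)
                  = if m = k then E l k else 0 := by
                intro m
                by_cases h1 : deg l + deg m = d + t
                · simp only [if_pos h1]
                  rw [← Finset.mul_sum, ← map_sum, hγ m k]
                  by_cases hmk : m = k
                  · subst hmk
                    rw [if_pos rfl, map_one, mul_one, if_pos rfl]
                  · rw [if_neg hmk, map_zero, mul_zero, if_neg hmk]
                · simp only [if_neg h1, Finset.sum_const_zero]
                  rw [if_neg]
                  intro hmk
                  subst hmk
                  omega
              rw [Finset.sum_congr rfl fun m _ => hcollapse m,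
                Finset.sum_ite_eq' Finset.univ k, if_pos (Finset.mem_univ k)]
              rw [hEsymm k l, smul_smul, smul_smul, smul_smul]
              congr 1
              have hone : ((-1:ℝ) ^ (t * deg k)) * ((-1:ℝ) ^ (deg k * (d - deg k)))
                  * ((-1:ℝ) ^ (deg k * deg l)) = 1 := by
                rw [← zpow_add₀ hneg1, ← zpow_add₀ hneg1]
                refine hsgn _ ⟨deg k * (t + d - deg k), ?_⟩
                have hlval : deg l = d + t - deg k := by omega
                rw [hlval]; ring
              linear_combination (2⁻¹:ℝ) * hone
            rw [hexp, h2, h3, h4, sub_zero, hBE k l, sub_sub, ← add_smul]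
            norm_num
  -- choose the final matrix A
  obtain ⟨A, hA1, hA2, hGram⟩ :=
    key (Finset.univ.sup fun p : Fin N × Fin N => (deg p.1 + deg p.2 - d).toNat)
  have hGramAll : ∀ k l, B (xvec bV A k) (xvec bV A l) = algebraMap ℝ R (g0 k l) := by
    intro k l
    apply hGram
    have h1 := Int.self_le_toNat (deg k + deg l - d)
    have h2 : (deg k + deg l - d).toNat ≤
        Finset.univ.sup fun p : Fin N × Fin N => (deg p.1 + deg p.2 - d).toNat :=
      Finset.le_sup (f := fun p : Fin N × Fin N => (deg p.1 + deg p.2 - d).toNat)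
        (Finset.mem_univ (k, l))
    omega
  -- the correction matrix is strictly degree-raising, hence nilpotent
  set Nm : Matrix (Fin N) (Fin N) R := A - 1 with hNmdef
  have hNmdeg : ∀ i k, Nm i k ∈ 𝒜 (deg k - deg i) := by
    intro i k
    rw [hNmdef]
    simp only [Matrix.sub_apply]
    refine Submodule.sub_mem _ (hA1 i k) ?_
    by_cases h : i = k
    · subst h; rw [Matrix.one_apply_eq, sub_self]; exact hRone
    · rw [Matrix.one_apply_ne h]; exact Submodule.zero_mem _
  have hNm0 : ∀ i k, deg k - deg i < 1 → Nm i k = 0 := by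
    intro i k h
    rw [hNmdef]
    simp only [Matrix.sub_apply]
    by_cases hik : deg i = deg k
    · rw [hA2 i k hik, Matrix.one_apply, sub_self]
    · have h1 : A i k = 0 := hbotA _ _ (by omega) (hA1 i k)
      have h2 : i ≠ k := fun he => hik (by rw [he])
      rw [h1, Matrix.one_apply_ne h2, sub_zero]
  have hAsplit : mkMat bV A = LinearMap.id + mkMat bV Nm := by
    rw [show A = 1 + Nm from by rw [hNmdef]; abel, mkMat_add, mkMat_one]
  have hpow : ∀ m : ℕ, ∃ P : Matrix (Fin N) (Fin N) R,
      (mkMat bV Nm) ^ (m + 1) = mkMat bV P ∧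
      (∀ i k, deg k - deg i < 1 + (m : ℤ) → P i k = 0) := by
    intro m
    induction m with
    | zero =>
        refine ⟨Nm, by rw [pow_one], fun i k h => hNm0 i k (by push_cast at h; omega)⟩
    | succ m ih =>
        obtain ⟨P, hPe, hP2⟩ := ih
        refine ⟨Matrix.of fun i k => ∑ j, P j k * Nm i j, ?_, ?_⟩
        · rw [pow_succ', hPe]
          rw [show ((mkMat bV Nm) * (mkMat bV P) : Module.End ℝ (TensorProduct ℝ R V))
            = (mkMat bV Nm) ∘ₗ (mkMat bV P) from rfl]
          rw [mkMat_comp]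
        · intro i k h
          simp only [Matrix.of_apply]
          refine Finset.sum_eq_zero fun j _ => ?_
          by_cases hj : deg j - deg i < 1
          · rw [hNm0 i j hj, mul_zero]
          · rw [hP2 j k (by push_cast at h ⊢; omega), zero_mul]
  have hnil : IsNilpotent (mkMat bV Nm) := by
    obtain ⟨P, hPe, hP2⟩ :=
      hpow (Finset.univ.sup fun p : Fin N × Fin N => (deg p.2 - deg p.1).toNat)
    refine ⟨(Finset.univ.sup fun p : Fin N × Fin N => (deg p.2 - deg p.1).toNat) + 1, ?_⟩
    rw [hPe]
    have hP0 : P = 0 := by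
      ext i k
      rw [Matrix.zero_apply]
      apply hP2
      have h1 := Int.self_le_toNat (deg k - deg i)
      have h2 : (deg k - deg i).toNat ≤
          Finset.univ.sup fun p : Fin N × Fin N => (deg p.2 - deg p.1).toNat :=
        Finset.le_sup (f := fun p : Fin N × Fin N => (deg p.2 - deg p.1).toNat)
          (Finset.mem_univ (i, k))
      omega
    rw [hP0, mkMat_zero]
  have hbij : Function.Bijective (mkMat bV A) := by
    apply (Module.End.isUnit_iff (mkMat bV A)).mp
    rw [hAsplit]
    rw [show (LinearMap.id : TensorProduct ℝ R V →ₗ[ℝ] TensorProduct ℝ R V)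
      = (1 : Module.End ℝ (TensorProduct ℝ R V)) from rfl]
    exact IsNilpotent.isUnit_one_add (R := Module.End ℝ (TensorProduct ℝ R V)) hnil
  -- support of coordinates of homogeneous vectors
  have hrepr : ∀ (jv : ℤ) (v : V), v ∈ 𝒱 jv → ∀ k, bV.repr v k ≠ 0 → deg k = jv := by
    intro jv v hv k hk
    by_contra hne
    set S := Finset.univ.filter (fun m => ¬ deg m = jv) with hS
    have hw : (∑ m ∈ Finset.univ.filter (fun m => deg m = jv), bV.repr v m • bV m) ∈ 𝒱 jv := by
      refine Submodule.sum_mem _ fun m hm => ?_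
      have := (Finset.mem_filter.mp hm).2
      exact this ▸ Submodule.smul_mem _ _ (hbV m)
    have hsum : v - (∑ m ∈ Finset.univ.filter (fun m => deg m = jv), bV.repr v m • bV m)
        = ∑ m ∈ S, bV.repr v m • bV m := by
      rw [hS, sub_eq_iff_eq_add, add_comm]
      conv_lhs => rw [← Module.Basis.sum_repr bV v]
      exact (Finset.sum_filter_add_sum_filter_not Finset.univ (fun m => deg m = jv) _).symm
    have hvw2 : v - (∑ m ∈ Finset.univ.filter (fun m => deg m = jv), bV.repr v m • bV m)
        ∈ ⨆ (i : ℤ) (_ : i ≠ jv), 𝒱 i := by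
      rw [hsum]
      refine Submodule.sum_mem _ fun m hm => ?_
      have hne' : deg m ≠ jv := by
        rw [hS] at hm
        exact (Finset.mem_filter.mp hm).2
      exact Submodule.mem_iSup_of_mem (deg m)
        (Submodule.mem_iSup_of_mem hne' (Submodule.smul_mem _ _ (hbV m)))
    have h0 : v - (∑ m ∈ Finset.univ.filter (fun m => deg m = jv), bV.repr v m • bV m) = 0 :=
      Submodule.disjoint_def.mp (hVinternal.submodule_iSupIndep jv) _
        (Submodule.sub_mem _ hv hw) hvw2
    have h0' : (∑ m ∈ S, bV.repr v m • bV m) = 0 := by rw [← hsum, h0]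
    have hrk : bV.repr (∑ m ∈ S, bV.repr v m • bV m) k = bV.repr v k := by
      rw [map_sum, Finset.sum_apply']
      rw [Finset.sum_eq_single k]
      · rw [map_smul, Finsupp.smul_apply, Module.Basis.repr_self, Finsupp.single_eq_same,
          smul_eq_mul, mul_one]
      · intro b _ hb
        rw [map_smul, Finsupp.smul_apply, Module.Basis.repr_self, Finsupp.single_apply,
          if_neg hb, smul_zero]
      · intro hkS
        exact absurd (Finset.mem_filter.mpr ⟨Finset.mem_univ k, hne⟩) (hS ▸ hkS)
    rw [h0', map_zero, Finsupp.coe_zero, Pi.zero_apply] at hrk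
    exact hk hrk.symm
  -- f has degree 0
  have hfdeg : ∀ n : ℤ, ∀ x ∈ gradedPiece R V 𝒜 𝒱 n,
      mkMat bV A x ∈ gradedPiece R V 𝒜 𝒱 n := by
    intro n x hx
    induction hx using Submodule.span_induction with
    | mem m hm =>
        obtain ⟨iR, jv, r, v, hij, hr, hv, rfl⟩ := hm
        rw [mkMat_tmul]
        refine Submodule.sum_mem _ fun k _ => Submodule.sum_mem _ fun i _ => ?_
        by_cases hk : bV.repr v k = 0
        · rw [hk, zero_smul]; exact Submodule.zero_mem _
        · refine Submodule.smul_mem _ _ ?_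
          have hdk : deg k = jv := hrepr jv v hv k hk
          have hmem := htmulmem (iR + (deg k - deg i)) (deg i) _ _
            (hRmul _ _ _ hr _ (hA1 i k)) (hbV i)
          rwa [show iR + (deg k - deg i) + deg i = n by omega] at hmem
    | zero => exact Submodule.zero_mem _
    | add x₁ y₁ _ _ h1 h2 => rw [map_add]; exact Submodule.add_mem _ h1 h2
    | smul c x₁ _ h1 => rw [map_smul]; exact Submodule.smul_mem _ _ h1
  -- f is the identity modulo the augmentation ideal
  have hid : ∀ v : V, mkMat bV A ((1:R) ⊗ₜ[ℝ] v) - (1:R) ⊗ₜ[ℝ] v ∈ spanDegGE R V 𝒜 1 := by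
    intro v
    have hfx : mkMat bV A ((1:R) ⊗ₜ[ℝ] v) - (1:R) ⊗ₜ[ℝ] v = mkMat bV Nm ((1:R) ⊗ₜ[ℝ] v) := by
      rw [hAsplit, LinearMap.add_apply, LinearMap.id_apply, add_sub_cancel_left]
    rw [hfx, mkMat_tmul]
    refine Submodule.sum_mem _ fun k _ => Submodule.sum_mem _ fun i _ =>
      Submodule.smul_mem _ _ ?_
    by_cases h : deg k - deg i < 1
    · rw [hNm0 i k h, mul_zero, zero_tmul]; exact Submodule.zero_mem _
    · exact Submodule.subset_span
        ⟨deg k - deg i, 1 * Nm i k, bV i, by omega, by rw [one_mul]; exact hNmdeg i k, rfl⟩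
  -- the pairing identity
  have hbase : ∀ v w : V,
      B (mkMat bV A ((1:R) ⊗ₜ[ℝ] v)) (mkMat bV A ((1:R) ⊗ₜ[ℝ] w))
        = algebraMap ℝ R (ε (B ((1:R) ⊗ₜ[ℝ] v) ((1:R) ⊗ₜ[ℝ] w))) := by
    intro v w
    have hv_eq : (1:R) ⊗ₜ[ℝ] v = ∑ k, bV.repr v k • ((1:R) ⊗ₜ[ℝ] bV k) := by
      conv_lhs => rw [← Module.Basis.sum_repr bV v]
      rw [tmul_sum]
      exact Finset.sum_congr rfl fun k _ => tmul_smul _ _ _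
    have hw_eq : (1:R) ⊗ₜ[ℝ] w = ∑ l, bV.repr w l • ((1:R) ⊗ₜ[ℝ] bV l) := by
      conv_lhs => rw [← Module.Basis.sum_repr bV w]
      rw [tmul_sum]
      exact Finset.sum_congr rfl fun l _ => tmul_smul _ _ _
    rw [hv_eq, hw_eq]
    simp only [map_sum, map_smul, LinearMap.sum_apply, LinearMap.smul_apply,
      mkMat_one_tmul_basis]
    refine Finset.sum_congr rfl fun l _ => ?_
    rw [smul_eq_mul, halgsmul]
    congr 1
    rw [map_sum]
    refine Finset.sum_congr rfl fun k _ => ?_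
    rw [smul_eq_mul, halgsmul, hGramAll k l]
  refine ⟨mkMat bV A, hbij, fun r x => mkMat_rsmul bV A r x, hfdeg, hid, ?_⟩
  intro iR jR a b r sR v w hr hs hv hw
  have hXdeg : mkMat bV A ((1:R) ⊗ₜ[ℝ] v) ∈ gradedPiece R V 𝒜 𝒱 a := by
    apply hfdeg
    have := htmulmem 0 a 1 v hRone hv
    rwa [zero_add] at this
  rw [show r ⊗ₜ[ℝ] v = rsmul R V r ((1:R) ⊗ₜ[ℝ] v) from (rsmul_tmul' r v).symm,
    show sR ⊗ₜ[ℝ] w = rsmul R V sR ((1:R) ⊗ₜ[ℝ] w) from (rsmul_tmul' sR w).symm,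
    mkMat_rsmul, mkMat_rsmul, hBl, hBr jR a sR hs _ hXdeg, hbase v w,
    mul_smul_comm, mul_assoc]
end
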